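/- An element y ∈ A satisfies y·M_{n,s} = 0 for every 1 ≤ s ≤ n if and only if y ∈ N_n, the F_p[x_1,…,x_n]-submodule of A spanned by a_1 a_2 ⋯ a_n. -/

import Mathlib

/-! Expanding the Moore determinant by cofactors gives `∑ₛ (-1)ˢ C_{s,j} M_{n,s} = L_n a_j`;
since `L_n ≠ 0` (its diagonal monomial `∏ xᵢ^{p^{i-1}}` has coefficient one) and `A` is free over
the domain `F_p[x]`, `y` kills every `M_{n,s}` iff it kills every `a_j`. In the monomial basis
`a_S` of the exterior algebra, right multiplication by `a_j` sends `a_S` to `± a_{S ∪ {j}}` for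
`j ∉ S`, injectively in `S`, so `y a_j = 0` for all `j` leaves only the coefficient of
`a_1 ⋯ a_n`. -/

set_option maxHeartbeats 1000000
set_option synthInstance.maxHeartbeats 400000

open scoped BigOperators

noncomputable section

/-- The polynomial part `F_p[x_1,…,x_m]`. -/
abbrev Rp (p m : ℕ) := MvPolynomial (Fin m) (ZMod p)

/-- The model `A = F_p[x_1,…,x_m] ⊗ Λ(a_1,…,a_m)` of the mod-`p` cohomology ring of an
elementary abelian `p`-group of rank `m`, realized as the exterior algebra over the
polynomial ring `Rp p m` on the free module of rank `m`. -/
abbrev Ap (p m : ℕ) := ExteriorAlgebra (Rp p m) (Fin m → Rp p m)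

/-- The degree-one exterior generators `a_i`. -/
def aa (p m : ℕ) (i : Fin m) : Ap p m := ExteriorAlgebra.ι (Rp p m) (Pi.single i 1)

/-- The degree-two polynomial generators `x_i`. -/
def xx (p m : ℕ) (i : Fin m) : Ap p m := algebraMap (Rp p m) (Ap p m) (MvPolynomial.X i)

/-- The ordered product `a_{i_1} ⋯ a_{i_r}` over a subset `S = {i_1 < ⋯ < i_r}`. -/
def aProd (p m : ℕ) (S : Finset (Fin m)) : Ap p m := ((S.sort (· ≤ ·)).map (aa p m)).prod

/-- `N_r = F_p[x_1,…,x_m] ⊗ Λ^r`, the `Rp p m`-submodule of `Ap p m` spanned by the products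
`a_{i_1} ⋯ a_{i_r}` with `i_1 < ⋯ < i_r`. -/
def Nsub (p m : ℕ) (r : ℕ) : Submodule (Rp p m) (Ap p m) :=
  Submodule.span (Rp p m) {z | ∃ S : Finset (Fin m), S.card = r ∧ z = aProd p m S}

/-- `a_φ = Σ_i φ_i a_i` for `φ ∈ F_p^m`. -/
def aphi (p m : ℕ) (φ : Fin m → ZMod p) : Ap p m :=
  ∑ i : Fin m, (MvPolynomial.C (φ i) : Rp p m) • aa p m i

/-- `x_φ = Σ_i φ_i x_i` for `φ ∈ F_p^m`. -/
def xphi (p m : ℕ) (φ : Fin m → ZMod p) : Ap p m :=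
  ∑ i : Fin m, (MvPolynomial.C (φ i) : Rp p m) • xx p m i

/-- The essential ideal `Ess(A) = ⋂_{φ ≠ 0} (a_φ, x_φ)`, the intersection over all nonzero
`φ ∈ F_p^m` of the two-sided ideals of `A` generated by `a_φ` and `x_φ`. -/
def Ess (p m : ℕ) : Set (Ap p m) :=
  ⋂ φ ∈ {φ : Fin m → ZMod p | φ ≠ 0},
    (TwoSidedIdeal.span {aphi p m φ, xphi p m φ} : Set (Ap p m))

/-- The `m × m` Moore matrix with entries `C_{s,i} = x_i^{p^{s-1}}` (zero-based: row `s`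
has entries `x_i^{p^s}`). -/
def moore (p m : ℕ) : Matrix (Fin m) (Fin m) (Rp p m) :=
  Matrix.of fun s i => (MvPolynomial.X i) ^ (p ^ (s : ℕ))

/-- `L_m = det C`, the Moore determinant. -/
def Ldet (p m : ℕ) : Rp p m := (moore p m).det

/-- `γ_{s,i}`: the determinant of the minor of the Moore matrix obtained by deleting
row `s` and column `i` (here the rank is `n+1`). -/
def gam (p n : ℕ) (s i : Fin (n + 1)) : Rp p (n + 1) :=
  ((moore p (n + 1)).submatrix s.succAbove i.succAbove).det

/-- The Mùi invariant `M_{n,s} = Σ_i (-1)^{i+1} γ_{s,i} a_i` (zero-based sign `(-1)^i`). -/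
def Mui (p n : ℕ) (s : Fin (n + 1)) : Ap p (n + 1) :=
  ∑ i : Fin (n + 1), (((-1) ^ (i : ℕ) * gam p n s i : Rp p (n + 1))) • aa p (n + 1) i

namespace ExteriorAlgebra

open Module

variable {R M I : Type*} [CommRing R] [AddCommGroup M] [Module R M] [LinearOrder I]
  (b : Basis I R M)

lemma basis_apply_eq_prod_sort (S : Finset I) :
    b.ExteriorAlgebra S = ((S.sort (· ≤ ·)).map (ι R ∘ b)).prod := by
  rw [basis_apply_ofCard b rfl, ιMulti_family, ιMulti_apply, List.ofFn_eq_map,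
    Set.powersetCard.ofFinEmbEquiv_symm_apply, ← Finset.listMap_orderEmbOfFin_finRange S rfl,
    List.map_map]
  rfl

lemma basis_singleton (j : I) : b.ExteriorAlgebra {j} = ι R (b j) := by
  simp [basis_apply_eq_prod_sort]

lemma basis_mul_ι_of_mem {S : Finset I} {j : I} (hj : j ∈ S) :
    b.ExteriorAlgebra S * ι R (b j) = 0 := by
  rw [← basis_singleton, basis_apply_ofCard b rfl, basis_apply_ofCard b (Finset.card_singleton j),
    ← basis_apply_powersetCard, ← basis_apply_powersetCard]
  exact basis_mul_of_not_disjoint b _ _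
    (Finset.not_disjoint_iff.mpr ⟨j, hj, Finset.mem_singleton_self j⟩)

lemma basis_mul_ι_of_notMem {S : Finset I} {j : I} (hj : j ∉ S) :
    ∃ ε : ℤˣ, b.ExteriorAlgebra S * ι R (b j) = ε • b.ExteriorAlgebra (insert j S) := by
  have hdisj : Disjoint S {j} := Finset.disjoint_singleton_right.mpr hj
  have h := basis_mul_of_disjoint b (Set.powersetCard.ofCard (rfl : S.card = S.card))
    (Set.powersetCard.ofCard (Finset.card_singleton j)) hdisj
  change b.ExteriorAlgebra S * b.ExteriorAlgebra {j} =
    _ • b.ExteriorAlgebra (S.disjUnion {j} hdisj) at h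
  rw [basis_singleton, Finset.disjUnion_eq_union, Finset.union_comm, ← Finset.insert_eq] at h
  exact ⟨_, h⟩

lemma basis_repr_eq_zero_of_mul_ι_eq_zero {x : ExteriorAlgebra R M} {j : I}
    (hx : x * ι R (b j) = 0) {S : Finset I} (hj : j ∉ S) : b.ExteriorAlgebra.repr x S = 0 := by
  obtain ⟨ε, hε⟩ := basis_mul_ι_of_notMem b hj
  -- On `a_T` with `j ∉ T` the left side is `± [insert j T = insert j S] = ± [T = S]`.
  have key : b.ExteriorAlgebra.coord (insert j S) ∘ₗ LinearMap.mulRight R (ι R (b j)) =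
      ε • b.ExteriorAlgebra.coord S := by
    refine b.ExteriorAlgebra.ext fun T => ?_
    rcases eq_or_ne T S with rfl | hTS
    · simp [hε]
    by_cases hjT : j ∈ T
    · simp [basis_mul_ι_of_mem b hjT, Finsupp.single_eq_of_ne' hTS]
    · obtain ⟨ε', hε'⟩ := basis_mul_ι_of_notMem b hjT
      have hins : insert j T ≠ insert j S := fun h => hTS <| by
        rw [← Finset.erase_insert hjT, h, Finset.erase_insert hj]
      simp [hε', Finsupp.single_eq_of_ne' hins, Finsupp.single_eq_of_ne' hTS]
  have h := LinearMap.congr_fun key x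
  simp only [LinearMap.comp_apply, LinearMap.mulRight_apply, hx, map_zero, LinearMap.smul_apply,
    Basis.coord_apply] at h
  exact (smul_eq_zero_iff_eq ε).mp h.symm

lemma forall_mul_ι_eq_zero_iff_mem_span_basis_univ [Fintype I] {x : ExteriorAlgebra R M} :
    (∀ j, x * ι R (b j) = 0) ↔ x ∈ R ∙ b.ExteriorAlgebra Finset.univ := by
  refine ⟨fun hx => ?_, fun hx j => ?_⟩
  · refine Submodule.mem_span_singleton.mpr ⟨b.ExteriorAlgebra.repr x Finset.univ, ?_⟩
    refine b.ExteriorAlgebra.repr.injective (Finsupp.ext fun S => ?_)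
    rcases eq_or_ne S Finset.univ with rfl | hS
    · simp
    · obtain ⟨j, hj⟩ : ∃ j, j ∉ S := by simpa [Finset.eq_univ_iff_forall] using hS
      simp [Finsupp.single_eq_of_ne hS, basis_repr_eq_zero_of_mul_ι_eq_zero b (hx j) hj]
  · obtain ⟨c, rfl⟩ := Submodule.mem_span_singleton.mp hx
    rw [smul_mul_assoc, basis_mul_ι_of_mem b (Finset.mem_univ j), smul_zero]

end ExteriorAlgebra

lemma Matrix.sum_smul_sum_adjugate_smul {ι R M : Type*} [Fintype ι] [DecidableEq ι] [CommRing R]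
    [AddCommGroup M] [Module R M] (A : Matrix ι ι R) (v : ι → M) (j : ι) :
    ∑ s, A s j • ∑ i, A.adjugate i s • v i = A.det • v j := by
  calc ∑ s, A s j • ∑ i, A.adjugate i s • v i
      = ∑ i, (A.adjugate * A) i j • v i := by
        simp only [Finset.smul_sum, smul_smul, Matrix.mul_apply, Finset.sum_smul]
        rw [Finset.sum_comm]
        simp only [mul_comm]
    _ = A.det • v j := by
        simp [Matrix.adjugate_mul, Matrix.one_apply, ite_smul]

lemma MvPolynomial.det_of_X_pow_ne_zero {σ R : Type*} [Fintype σ] [DecidableEq σ] [CommRing R]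
    [Nontrivial R] {e : σ → ℕ} (he : Function.Injective e) :
    (Matrix.of fun s i => (X i : MvPolynomial σ R) ^ e s).det ≠ 0 := by
  -- Only the identity permutation contributes the monomial `∏ i, X i ^ e i`.
  let d : σ →₀ ℕ := Finsupp.indicator Finset.univ fun i _ => e i
  have hcoeff : coeff d (Matrix.of fun s i => (X i : MvPolynomial σ R) ^ e s).det = 1 := by
    have hd : ∀ σ' : Equiv.Perm σ,
        d = Finsupp.indicator Finset.univ (fun i _ => e (σ' i)) ↔ σ' = 1 := by
      intro σ'
      refine ⟨fun h => Equiv.ext fun i => he ?_, fun h => by simp [h, d]⟩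
      simpa [d] using (DFunLike.congr_fun h i).symm
    simp only [Matrix.det_apply, Matrix.of_apply, coeff_sum, Units.smul_def, coeff_smul,
      coeff_prod_X_pow, hd]
    simp
  intro h
  simp [h] at hcoeff

open ExteriorAlgebra

lemma aa_eq_ι_basisFun (p m : ℕ) (i : Fin m) :
    aa p m i = ι (Rp p m) (Pi.basisFun (Rp p m) (Fin m) i) := by
  rw [aa, Pi.basisFun_apply]

lemma aProd_eq_basis (p m : ℕ) (S : Finset (Fin m)) :
    aProd p m S = (Pi.basisFun (Rp p m) (Fin m)).ExteriorAlgebra S := by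
  rw [basis_apply_eq_prod_sort, aProd]
  congr 2
  funext i
  exact aa_eq_ι_basisFun p m i

lemma Nsub_self (p m : ℕ) : Nsub p m m = Rp p m ∙ aProd p m Finset.univ := by
  rw [Nsub]
  congr 1
  ext z
  constructor
  · rintro ⟨S, hS, rfl⟩
    rw [(Finset.card_eq_iff_eq_univ S).mp (hS.trans (Fintype.card_fin m).symm)]
    rfl
  · rintro rfl
    exact ⟨_, Finset.card_fin m, rfl⟩

lemma Mui_eq_smul_sum_adjugate (p n : ℕ) (s : Fin (n + 1)) :
    Mui p n s = (-1 : Rp p (n + 1)) ^ (s : ℕ) •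
      ∑ i, (moore p (n + 1)).adjugate i s • aa p (n + 1) i := by
  simp only [Mui, Finset.smul_sum, smul_smul, Matrix.adjugate_fin_succ_eq_det_submatrix, gam]
  refine Finset.sum_congr rfl fun i _ => ?_
  rw [← mul_assoc, ← pow_add, ← add_assoc, ← two_mul, pow_add, pow_mul]
  simp

lemma Ldet_ne_zero (p m : ℕ) [Fact p.Prime] : Ldet p m ≠ 0 :=
  MvPolynomial.det_of_X_pow_ne_zero
    ((Nat.pow_right_injective (Fact.out : p.Prime).two_le).comp Fin.val_injective)

lemma forall_mul_Mui_eq_zero_iff (p n : ℕ) [Fact p.Prime] (y : Ap p (n + 1)) :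
    (∀ s, y * Mui p n s = 0) ↔ ∀ j, y * aa p (n + 1) j = 0 := by
  refine ⟨fun H j => ?_, fun H s => ?_⟩
  · have hadj : ∀ s, y * ∑ i, (moore p (n + 1)).adjugate i s • aa p (n + 1) i = 0 := fun s => by
      simpa only [Mui_eq_smul_sum_adjugate, mul_smul_comm, (isUnit_neg_one.pow _).smul_eq_zero]
        using H s
    have hL : Ldet p (n + 1) • (y * aa p (n + 1) j) = 0 := by
      rw [← mul_smul_comm, Ldet, ← Matrix.sum_smul_sum_adjugate_smul, Finset.mul_sum]
      exact Finset.sum_eq_zero fun s _ => by rw [mul_smul_comm, hadj s, smul_zero]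
    exact ((Pi.basisFun _ _).ExteriorAlgebra.smul_eq_zero.mp hL).resolve_left (Ldet_ne_zero p _)
  · rw [Mui, Finset.mul_sum]
    exact Finset.sum_eq_zero fun i _ => by rw [mul_smul_comm, H i, smul_zero]

theorem joint_annihilator_Mui_general (p n : ℕ) [Fact p.Prime]
    (y : Ap p (n + 1)) :
    (∀ s : Fin (n + 1), y * Mui p n s = 0) ↔ y ∈ Nsub p (n + 1) (n + 1) := by
  rw [forall_mul_Mui_eq_zero_iff, Nsub_self, aProd_eq_basis,
    ← forall_mul_ι_eq_zero_iff_mem_span_basis_univ]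
  simp only [aa_eq_ι_basisFun]

/-- An element `y ∈ A` satisfies `y·M_{n,s} = 0` for every `s` if and only if
`y ∈ N_n`, the top exterior component (the rank is `n+1`). -/
theorem joint_annihilator_Mui (p n : ℕ) [Fact p.Prime] (hodd : Odd p)
    (y : Ap p (n + 1)) :
    (∀ s : Fin (n + 1), y * Mui p n s = 0) ↔ y ∈ Nsub p (n + 1) (n + 1) :=
  joint_annihilator_Mui_general p n y
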